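/- Let (𝓐, E, 𝓑) be as in the context, let φ be a state on 𝓑, let x ∈ 𝓐 be selfadjoint, and let b₁, b₂ ∈ H⁺(𝓑). Write G_x(b) := E[(b − x)⁻¹] for b ∈ H⁺(𝓑) and Θ_x(b) := −‖Im(b)⁻¹‖⁻¹·Im(φ(G_x(b))). Then |φ(G_x(b₁)) − φ(G_x(b₂))| ≤ √(Θ_x(b₁)·Θ_x(b₂))·‖Im(b₁)⁻¹‖·‖Im(b₂)⁻¹‖·‖b₁ − b₂‖. -/

import Mathlib

open scoped ComplexOrder

/-- The imaginary part `Im(b) = (b − b*)/(2i)` of an element of a C*-algebra. -/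
noncomputable def imPart {A : Type*} [CStarAlgebra A] (b : A) : A :=
  ((2 : ℂ) * Complex.I)⁻¹ • (b - star b)

/-- The upper half-plane `H⁺ = {b : ∃ ε > 0, Im(b) ≥ ε·1}`. -/
def upperHalfPlane (A : Type*) [CStarAlgebra A] [PartialOrder A] : Set A :=
  {b | ∃ ε : ℝ, 0 < ε ∧ (ε : ℂ) • (1 : A) ≤ imPart b}

section Aux

variable {A : Type*} [CStarAlgebra A]

lemma two_I_ne : ((2 : ℂ) * Complex.I) ≠ 0 := by simp [Complex.I_ne_zero]

lemma imPart_isSelfAdjoint (b : A) : IsSelfAdjoint (imPart b) := by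
  have h : star (((2 : ℂ) * Complex.I)⁻¹) = -((2 : ℂ) * Complex.I)⁻¹ := by
    simp [Complex.star_def, ← map_inv₀, Complex.ext_iff]
  rw [IsSelfAdjoint, imPart, star_smul, star_sub, star_star, h, neg_smul, ← smul_neg, neg_sub]

lemma sub_star_eq_smul_imPart (b : A) : b - star b = ((2 : ℂ) * Complex.I) • imPart b := by
  rw [imPart, smul_inv_smul₀ two_I_ne]

lemma imPart_sub_isSelfAdjoint (b x : A) (hx : IsSelfAdjoint x) :
    imPart (b - x) = imPart b := by
  rw [imPart, imPart, star_sub, hx.star_eq]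
  congr 1
  abel

end Aux

section Main
variable {A : Type*} [CStarAlgebra A] [PartialOrder A] [StarOrderedRing A]

lemma smul_one_nonneg {ε : ℝ} (hε : 0 ≤ ε) : (0:A) ≤ (ε : ℂ) • (1 : A) := by
  have h1 : ((ε : ℂ)) • (1 : A) =
      star (algebraMap ℂ A (Real.sqrt ε)) * algebraMap ℂ A (Real.sqrt ε) := by
    rw [← algebraMap_star_comm, ← map_mul, Complex.star_def, Complex.conj_ofReal,
      ← Complex.ofReal_mul, Real.mul_self_sqrt hε, Algebra.algebraMap_eq_smul_one]
  rw [h1]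
  exact star_mul_self_nonneg _

omit [PartialOrder A] [StarOrderedRing A] in
lemma smul_one_isUnit {ε : ℝ} (hε : 0 < ε) : IsUnit ((ε : ℂ) • (1 : A)) := by
  rw [← Algebra.algebraMap_eq_smul_one]
  exact (isUnit_iff_ne_zero.mpr (by exact_mod_cast hε.ne')).map (algebraMap ℂ A)

lemma imPart_nonneg {b : A} (hb : b ∈ upperHalfPlane A) : 0 ≤ imPart b := by
  obtain ⟨ε, hε, hle⟩ := hb
  exact (smul_one_nonneg hε.le).trans hle

lemma imPart_isUnit {b : A} (hb : b ∈ upperHalfPlane A) : IsUnit (imPart b) := by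
  obtain ⟨ε, hε, hle⟩ := hb
  exact CStarAlgebra.isUnit_of_le _ hle ((smul_one_isUnit hε).isStrictlyPositive (smul_one_nonneg hε.le))

lemma norm_inverse_pos [Nontrivial A] {b : A} (hb : b ∈ upperHalfPlane A) :
    0 < ‖Ring.inverse (imPart b)‖ := by
  obtain ⟨u, hu⟩ := imPart_isUnit hb
  rw [← hu, Ring.inverse_unit]
  simpa [norm_pos_iff] using (u⁻¹).ne_zero

lemma smul_inv_norm_le [Nontrivial A] {b : A} (hb : b ∈ upperHalfPlane A) :
    ‖Ring.inverse (imPart b)‖⁻¹ • (1 : A) ≤ imPart b := by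
  obtain ⟨u, hu⟩ := imPart_isUnit hb
  have hk : (0:A) ≤ ↑u := hu ▸ imPart_nonneg hb
  have hki : (0:A) ≤ ↑u⁻¹ := CFC.inv_nonneg_of_nonneg u hk
  have hne : ‖Ring.inverse (imPart b)‖ ≠ 0 := (norm_inverse_pos hb).ne'
  set n : ℝ := ‖Ring.inverse (imPart b)‖ with hn
  have hinv : Ring.inverse (imPart b) = (↑u⁻¹ : A) := by rw [← hu, Ring.inverse_unit]
  have hle : (↑u⁻¹ : A) ≤ algebraMap ℝ A n := by
    rw [hn, hinv]
    exact IsSelfAdjoint.le_algebraMap_norm_self (IsSelfAdjoint.of_nonneg hki)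
  set w : Aˣ := Units.map (algebraMap ℝ A).toMonoidHom (Units.mk0 n hne) with hw
  have hwc : (↑w : A) = algebraMap ℝ A n := rfl
  have hwci : (↑w⁻¹ : A) = algebraMap ℝ A n⁻¹ := rfl
  have := CStarAlgebra.inv_le_inv (a := u⁻¹) (b := w) hki (by rw [hwc]; exact hle)
  rw [hwci, inv_inv] at this
  rw [← hu, ← Algebra.algebraMap_eq_smul_one]
  exact this

lemma isUnit_of_imPart_isUnit {c : A} (hk : 0 ≤ imPart c) (hu : IsUnit (imPart c)) :
    IsUnit c := by
  set k := imPart c with hkdef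
  set s := CFC.sqrt k with hsdef
  have hs : 0 ≤ s := CFC.sqrt_nonneg k
  have hss : s * s = k := CFC.sqrt_mul_sqrt_self k hk
  have hssa : IsSelfAdjoint s := IsSelfAdjoint.of_nonneg hs
  have hsU : IsUnit s := by
    obtain ⟨u, hu'⟩ := hu
    have h1 : s * (s * (↑u⁻¹ : A)) = 1 := by
      rw [← mul_assoc, hss, ← hu', Units.mul_inv]
    have h2 : ((↑u⁻¹ : A) * s) * s = 1 := by
      rw [mul_assoc, hss, ← hu', Units.inv_mul]
    exact isUnit_iff_exists.mpr ⟨s * ↑u⁻¹, h1, by rwa [left_inv_eq_right_inv h2 h1] at h2⟩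
  obtain ⟨su, hsu⟩ := hsU
  set t : A := (↑su⁻¹ : A) with htdef
  have hts : t * s = 1 := by rw [htdef, ← hsu, Units.inv_mul]
  have hst : s * t = 1 := by rw [htdef, ← hsu, Units.mul_inv]
  have htsa : star t = t := by
    have h1 : star t * s = 1 := by
      rw [← hssa.star_eq, ← star_mul, hst, star_one]
    calc star t = star t * (s * t) := by rw [hst, mul_one]
    _ = (star t * s) * t := by rw [mul_assoc]
    _ = t := by rw [h1, one_mul]
  set re : A := (2:ℂ)⁻¹ • (c + star c) with hredef
  have hre : IsSelfAdjoint re := by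
    rw [IsSelfAdjoint, hredef, star_smul, star_add, star_star]
    congr 1
    · simp [Complex.star_def, Complex.ext_iff]
    · abel
  have hdec : c = re + Complex.I • k := by
    have hik : Complex.I • k = (2:ℂ)⁻¹ • (c - star c) := by
      rw [hkdef, imPart, smul_smul]
      congr 1
      field_simp
    rw [hredef, hik, ← smul_add]
    rw [show c + star c + (c - star c) = (2:ℂ) • c by rw [two_smul]; abel]
    rw [smul_smul]
    norm_num
  set w : A := t * re * t with hwdef
  have hwsa : IsSelfAdjoint w := by
    rw [IsSelfAdjoint, hwdef, star_mul, star_mul, htsa, hre.star_eq, mul_assoc]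
  have hwI : IsUnit (w + Complex.I • 1) := by
    have hnot : (-Complex.I) ∉ spectrum ℂ w := by
      intro h
      have := hwsa.mem_spectrum_eq_re h
      simp [Complex.ext_iff] at this
    rw [spectrum.notMem_iff] at hnot
    have : algebraMap ℂ A (-Complex.I) - w = -(w + Complex.I • 1) := by
      rw [Algebra.algebraMap_eq_smul_one, neg_smul]
      abel
    rw [this] at hnot
    exact (IsUnit.neg_iff _).mp hnot
  have hfinal : c = s * (w + Complex.I • 1) * s := by
    have h1 : s * w * s = re := by
      rw [hwdef]
      calc s * (t * re * t) * s = (s * t) * re * (t * s) := by noncomm_ring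
      _ = re := by rw [hst, hts, one_mul, mul_one]
    have h2 : s * (Complex.I • 1) * s = Complex.I • k := by
      rw [mul_smul_comm, mul_one, smul_mul_assoc, hss]
    rw [mul_add, add_mul, h1, h2, ← hdec]
  rw [hfinal]
  have hsU2 : IsUnit s := ⟨su, hsu⟩
  exact (hsU2.mul hwI).mul hsU2

omit [PartialOrder A] [StarOrderedRing A] in
lemma imPart_inverse (c : A) (hu : IsUnit c) (r : A) (hr : r = Ring.inverse c) :
    imPart r = -(r * imPart c * star r) ∧ imPart r = -(star r * imPart c * r) := by
  obtain ⟨v, hv⟩ := hu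
  have hrc : r * c = 1 := by rw [hr, ← hv, Ring.inverse_unit, Units.inv_mul]
  have hcr : c * r = 1 := by rw [hr, ← hv, Ring.inverse_unit, Units.mul_inv]
  have hsrc : star c * star r = 1 := by rw [← star_mul, hrc, star_one]
  have hsrc' : star r * star c = 1 := by rw [← star_mul, hcr, star_one]
  have key1 : r * (star c - c) * star r = r - star r := by
    calc r * (star c - c) * star r
        = r * (star c * star r) - (r * c) * star r := by noncomm_ring
    _ = r - star r := by rw [hsrc, hrc, mul_one, one_mul]
  have key2 : star r * (star c - c) * r = r - star r := by
    calc star r * (star c - c) * r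
        = (star r * star c) * r - star r * (c * r) := by noncomm_ring
    _ = r - star r := by rw [hsrc', hcr, one_mul, mul_one]
  have hcc : star c - c = (-((2 : ℂ) * Complex.I)) • imPart c := by
    rw [neg_smul, ← sub_star_eq_smul_imPart, neg_sub]
  constructor
  · rw [imPart, ← key1, hcc, mul_smul_comm, smul_mul_assoc, smul_smul]
    rw [show ((2 : ℂ) * Complex.I)⁻¹ * -((2 : ℂ) * Complex.I) = -1 by
      field_simp]
    rw [neg_one_smul]
  · rw [imPart, ← key2, hcc, mul_smul_comm, smul_mul_assoc, smul_smul]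
    rw [show ((2 : ℂ) * Complex.I)⁻¹ * -((2 : ℂ) * Complex.I) = -1 by
      field_simp]
    rw [neg_one_smul]

lemma bundle [Nontrivial A] (ψ : A →ₗ[ℂ] ℂ) (hψsq : ∀ a : A, 0 ≤ ψ (star a * a))
    (hψstar : ∀ a : A, ψ (star a) = starRingEnd ℂ (ψ a))
    (hψmono : ∀ a c : A, a ≤ c → (ψ a).re ≤ (ψ c).re)
    (x : A) (hx : IsSelfAdjoint x) (b : A) (hb : b ∈ upperHalfPlane A) :
    IsUnit (b - x) ∧
    0 ≤ -(ψ (Ring.inverse (b - x))).im ∧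
    (ψ (Ring.inverse (b - x) * star (Ring.inverse (b - x)))).re ≤
        ‖Ring.inverse (imPart b)‖ * (-(ψ (Ring.inverse (b - x))).im) ∧
    (ψ (star (Ring.inverse (b - x)) * Ring.inverse (b - x))).re ≤
        ‖Ring.inverse (imPart b)‖ * (-(ψ (Ring.inverse (b - x))).im) := by
  set r := Ring.inverse (b - x) with hrdef
  have hkeq : imPart (b - x) = imPart b := imPart_sub_isSelfAdjoint b x hx
  have hbx : b - x ∈ upperHalfPlane A := by
    obtain ⟨ε, hε, hle⟩ := hb
    exact ⟨ε, hε, hkeq ▸ hle⟩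
  have hU : IsUnit (b - x) := isUnit_of_imPart_isUnit (imPart_nonneg hbx) (imPart_isUnit hbx)
  obtain ⟨hid1, hid2⟩ := imPart_inverse (b - x) hU r hrdef
  rw [hkeq] at hid1 hid2
  set n : ℝ := ‖Ring.inverse (imPart b)‖ with hn
  have hnpos : 0 < n := norm_inverse_pos hb
  have hlow : (n⁻¹ : ℝ) • (1 : A) ≤ imPart b := smul_inv_norm_le hb
  have hpsiim : ψ (imPart r) = ((ψ r).im : ℂ) := by
    rw [imPart, map_smul, map_sub, hψstar r, Complex.sub_conj, smul_eq_mul]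
    push_cast
    field_simp
  have hc1 : (n⁻¹ : ℝ) • (r * star r) ≤ -(imPart r) := by
    have h := star_right_conjugate_le_conjugate hlow r
    rw [mul_smul_comm, mul_one, smul_mul_assoc] at h
    rw [hid1, neg_neg]
    exact h
  have hc2 : (n⁻¹ : ℝ) • (star r * r) ≤ -(imPart r) := by
    have h := star_left_conjugate_le_conjugate hlow r
    rw [mul_smul_comm, mul_one, smul_mul_assoc] at h
    rw [hid2, neg_neg]
    exact h
  have hsmulre : ∀ z : A, (ψ ((n⁻¹ : ℝ) • z)).re = n⁻¹ * (ψ z).re := by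
    intro z
    rw [← Complex.coe_smul, map_smul, smul_eq_mul, Complex.re_ofReal_mul]
  have hnegre : (ψ (-(imPart r))).re = -((ψ r).im) := by
    rw [map_neg, Complex.neg_re, hpsiim, Complex.ofReal_re]
  have m1 : n⁻¹ * (ψ (r * star r)).re ≤ -((ψ r).im) := by
    have := hψmono _ _ hc1
    rwa [hsmulre, hnegre] at this
  have m2 : n⁻¹ * (ψ (star r * r)).re ≤ -((ψ r).im) := by
    have := hψmono _ _ hc2
    rwa [hsmulre, hnegre] at this
  have hrr : 0 ≤ (ψ (r * star r)).re := by
    have := (Complex.nonneg_iff.mp (hψsq (star r))).1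
    rwa [star_star] at this
  have hrr' : 0 ≤ (ψ (star r * r)).re := (Complex.nonneg_iff.mp (hψsq r)).1
  have him : 0 ≤ -((ψ r).im) :=
    le_trans (mul_nonneg (inv_nonneg.mpr hnpos.le) hrr) m1
  refine ⟨hU, him, ?_, ?_⟩
  · have : (ψ (r * star r)).re = n * (n⁻¹ * (ψ (r * star r)).re) := by
      field_simp
    rw [this]
    exact mul_le_mul_of_nonneg_left m1 hnpos.le
  · have : (ψ (star r * r)).re = n * (n⁻¹ * (ψ (star r * r)).re) := by
      field_simp
    rw [this]
    exact mul_le_mul_of_nonneg_left m2 hnpos.le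

lemma phi_nonneg_of_mem (S : StarSubalgebra ℂ A) (hS : IsClosed (S : Set A))
    (φ : A →ₗ[ℂ] ℂ) (hφpos : ∀ y ∈ S, 0 ≤ φ (star y * y))
    {p : A} (hpS : p ∈ S) (hp : 0 ≤ p) : 0 ≤ φ p := by
  have hpsa : IsSelfAdjoint p := IsSelfAdjoint.of_nonneg hp
  set q := cfc Real.sqrt p with hq
  have hqsa : IsSelfAdjoint q := cfc_predicate Real.sqrt p
  have hqq : q * q = p := by
    rw [hq, ← cfc_mul Real.sqrt Real.sqrt p]
    have heq : (spectrum ℝ p).EqOn (fun x => Real.sqrt x * Real.sqrt x) id := fun x hx =>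
      Real.mul_self_sqrt (spectrum_nonneg_of_nonneg hp hx)
    rw [cfc_congr heq, cfc_id ℝ p]
  have hqS : q ∈ S := by
    have hcont : ContinuousOn (fun z : ℂ => (Real.sqrt z.re : ℂ)) (spectrum ℂ p) :=
      Continuous.continuousOn (by fun_prop)
    rw [hq, cfc_real_eq_complex Real.sqrt (a := p) hpsa,
      cfc_apply (fun z : ℂ => (Real.sqrt z.re : ℂ)) p hpsa.isStarNormal hcont,
      cfcHom_eq_of_isStarNormal]
    exact StarAlgebra.elemental.le_of_mem hS hpS (SetLike.coe_mem _)
  have : φ p = φ (star q * q) := by rw [hqsa.star_eq, hqq]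
  rw [this]
  exact hφpos q hqS

lemma psi_herm (ψ : A →ₗ[ℂ] ℂ) (hψ : ∀ a : A, 0 ≤ ψ (star a * a)) (u v : A) :
    ψ (star v * u) = starRingEnd ℂ (ψ (star u * v)) := by
  have him : ∀ a : A, (ψ (star a * a)).im = 0 := fun a =>
    ((Complex.nonneg_iff.mp (hψ a)).2).symm
  have e1 : star (u + v) * (u + v)
      = star u * u + (star u * v + (star v * u + star v * v)) := by
    rw [star_add]; noncomm_ring
  have e2 : star (u + Complex.I • v) * (u + Complex.I • v)
      = star u * u + (Complex.I • (star u * v) +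
        ((-Complex.I) • (star v * u) + star v * v)) := by
    rw [star_add, star_smul]
    rw [show star Complex.I = -Complex.I by simp]
    rw [add_mul, mul_add, mul_add, smul_mul_assoc, mul_smul_comm, mul_smul_comm,
      smul_mul_assoc, smul_smul]
    rw [show Complex.I * -Complex.I = 1 by simp, one_smul]
    abel
  have h1 := him (u + v)
  rw [e1, map_add, map_add, map_add] at h1
  simp only [Complex.add_im, him u, him v] at h1
  -- h1 : (ψ (star u * v)).im + (ψ (star v * u)).im = 0 (modulo zeros)
  have h2 := him (u + Complex.I • v)
  rw [e2, map_add, map_add, map_add, map_smul, map_smul] at h2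
  simp only [Complex.add_im, him u, him v, smul_eq_mul, Complex.mul_im,
    Complex.I_re, Complex.I_im, Complex.neg_re, Complex.neg_im] at h2
  apply Complex.ext
  · simp only [Complex.conj_re]
    nlinarith [h2]
  · simp only [Complex.conj_im]
    linarith [h1]


lemma psi_cs (ψ : A →ₗ[ℂ] ℂ) (hψ : ∀ a : A, 0 ≤ ψ (star a * a)) (u v : A) :
    ‖ψ (star u * v)‖ ^ 2 ≤ (ψ (star u * u)).re * (ψ (star v * v)).re := by
  set α := ψ (star u * v) with hα
  set p := (ψ (star u * u)).re with hp
  set q := (ψ (star v * v)).re with hq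
  have hp0 : 0 ≤ p := (Complex.nonneg_iff.mp (hψ u)).1
  have hq0 : 0 ≤ q := (Complex.nonneg_iff.mp (hψ v)).1
  have key : ∀ t : ℂ, 0 ≤ p + 2 * (t * α).re + Complex.normSq t * q := by
    intro t
    have e : star (u + t • v) * (u + t • v)
        = star u * u + (t • (star u * v) +
          ((starRingEnd ℂ t) • (star v * u) + (starRingEnd ℂ t * t) • (star v * v))) := by
      rw [star_add, star_smul, RCLike.star_def]
      rw [add_mul, mul_add, mul_add, smul_mul_assoc, mul_smul_comm, mul_smul_comm,
        smul_mul_assoc, smul_smul, mul_comm t (starRingEnd ℂ t)]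
      abel
    have h0 := (Complex.nonneg_iff.mp (hψ (u + t • v))).1
    rw [e, map_add, map_add, map_add, map_smul, map_smul, map_smul] at h0
    rw [psi_herm ψ hψ u v, ← hα] at h0
    simp only [smul_eq_mul, Complex.add_re] at h0
    have hconj : (starRingEnd ℂ t * starRingEnd ℂ α).re = (t * α).re := by
      rw [← map_mul, Complex.conj_re]
    have hnsq : (starRingEnd ℂ t * t * ψ (star v * v)).re = Complex.normSq t * q := by
      rw [show starRingEnd ℂ t * t = (Complex.normSq t : ℂ) by
        rw [mul_comm, Complex.mul_conj]]
      rw [Complex.re_ofReal_mul]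
    rw [hconj, hnsq] at h0
    convert h0 using 1
    ring
  set N := Complex.normSq α with hN
  have key2 : ∀ s : ℝ, 0 ≤ p - 2 * N * s + N * s ^ 2 * q := by
    intro s
    have h := key (-(starRingEnd ℂ α) * (s : ℂ))
    have e1 : ((-(starRingEnd ℂ α) * (s : ℂ)) * α).re = -(N * s) := by
      rw [show -(starRingEnd ℂ α) * (s : ℂ) * α = -((α * starRingEnd ℂ α) * (s : ℂ)) by ring,
        Complex.mul_conj, hN, ← Complex.ofReal_mul, ← Complex.ofReal_neg, Complex.ofReal_re]
    have e2 : Complex.normSq (-(starRingEnd ℂ α) * (s : ℂ)) = N * s ^ 2 := by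
      rw [Complex.normSq_mul, Complex.normSq_neg, Complex.normSq_conj, Complex.normSq_ofReal, hN]
      ring
    rw [e1, e2] at h
    nlinarith [h]
  have habs : ‖α‖ ^ 2 = N := Complex.sq_norm α
  rw [habs]
  rcases eq_or_ne N 0 with h | h
  · rw [h]; exact mul_nonneg hp0 hq0
  · have hNpos : 0 < N := lt_of_le_of_ne (Complex.normSq_nonneg α) (Ne.symm h)
    have hqpos : 0 < q := by
      rcases hq0.lt_or_eq with h' | h'
      · exact h'
      · exfalso
        have hk := key2 ((p + 1) / (2 * N))
        rw [← h'] at hk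
        have : p - 2 * N * ((p + 1) / (2 * N)) + N * ((p + 1) / (2 * N)) ^ 2 * 0 = -1 := by
          field_simp
          ring
        linarith [hk, this]
    have hk := key2 (1 / q)
    have : p - 2 * N * (1 / q) + N * (1 / q) ^ 2 * q = p - N / q := by
      field_simp
      ring
    rw [this] at hk
    have h2 : N / q ≤ p := by linarith
    calc N = N / q * q := by field_simp
    _ ≤ p * q := mul_le_mul_of_nonneg_right h2 hq0

end Main


/-- Lipschitz bound for traces of operator-valued Cauchy transforms:
`|φ(G_x(b₁)) − φ(G_x(b₂))| ≤ √(Θ_x(b₁)·Θ_x(b₂))·‖Im(b₁)⁻¹‖·‖Im(b₂)⁻¹‖·‖b₁ − b₂‖`, where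
`G_x(b) = E[(b − x)⁻¹]` and `Θ_x(b) = −‖Im(b)⁻¹‖⁻¹·Im(φ(G_x(b)))`. -/
theorem cauchy_transform_trace_lipschitz {A : Type*} [CStarAlgebra A]
    [PartialOrder A] [StarOrderedRing A]
    (S : StarSubalgebra ℂ A) (E : A →L[ℂ] A)
    (hmem : ∀ a : A, E a ∈ S) (hfix : ∀ b ∈ S, E b = b)
    (hbimod : ∀ x : A, ∀ b₁ ∈ S, ∀ b₂ ∈ S, E (b₁ * x * b₂) = b₁ * E x * b₂)
    (hpos : ∀ a : A, 0 ≤ a → 0 ≤ E a)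
    (hcontr : ∀ a : A, ‖E a‖ ≤ ‖a‖)
    (φ : A →ₗ[ℂ] ℂ) (hφ1 : φ 1 = 1) (hφpos : ∀ y ∈ S, 0 ≤ φ (star y * y))
    (x : A) (hx : IsSelfAdjoint x)
    (b₁ b₂ : A) (hb₁S : b₁ ∈ S) (hb₂S : b₂ ∈ S)
    (hb₁ : b₁ ∈ upperHalfPlane A) (hb₂ : b₂ ∈ upperHalfPlane A) :
    ‖φ (E (Ring.inverse (b₁ - x))) - φ (E (Ring.inverse (b₂ - x)))‖ ≤
      Real.sqrt
          ((-(‖Ring.inverse (imPart b₁)‖⁻¹ * (φ (E (Ring.inverse (b₁ - x)))).im)) *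
            (-(‖Ring.inverse (imPart b₂)‖⁻¹ * (φ (E (Ring.inverse (b₂ - x)))).im))) *
        ‖Ring.inverse (imPart b₁)‖ * ‖Ring.inverse (imPart b₂)‖ * ‖b₁ - b₂‖ := by
  rcases subsingleton_or_nontrivial A with hA | hA
  · have h1 : E (Ring.inverse (b₁ - x)) = 0 := Subsingleton.elim _ _
    have h2 : E (Ring.inverse (b₂ - x)) = 0 := Subsingleton.elim _ _
    have h3 : Ring.inverse (imPart b₁) = 0 := Subsingleton.elim _ _
    have h4 : Ring.inverse (imPart b₂) = 0 := Subsingleton.elim _ _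
    rw [h1, h2, h3, h4]
    simp
  -- notation
  set ψ : A →ₗ[ℂ] ℂ := φ ∘ₗ (E : A →ₗ[ℂ] A) with hψdef
  have hψapp : ∀ a : A, ψ a = φ (E a) := fun a => rfl
  have hSclosed : IsClosed (S : Set A) := by
    have heq : (S : Set A) = {a | E a = a} :=
      Set.ext fun a => ⟨fun ha => hfix a ha, fun ha => ha ▸ hmem a⟩
    rw [heq]
    exact isClosed_eq E.continuous continuous_id
  have hψpos : ∀ a : A, 0 ≤ a → 0 ≤ ψ a := fun a ha =>
    phi_nonneg_of_mem S hSclosed φ hφpos (hmem a) (hpos a ha)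
  have hψsq : ∀ a : A, 0 ≤ ψ (star a * a) := fun a => hψpos _ (star_mul_self_nonneg a)
  have hψmono : ∀ a c : A, a ≤ c → (ψ a).re ≤ (ψ c).re := by
    intro a c hac
    have h0 := (Complex.nonneg_iff.mp (hψpos _ (sub_nonneg.mpr hac))).1
    rw [map_sub, Complex.sub_re] at h0
    linarith
  have hψstar : ∀ a : A, ψ (star a) = starRingEnd ℂ (ψ a) := by
    intro a
    have := psi_herm ψ hψsq 1 a
    simpa using this
  obtain ⟨hU₁, him₁, hQ₁, hQ₁'⟩ := bundle ψ hψsq hψstar hψmono x hx b₁ hb₁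
  obtain ⟨hU₂, him₂, hQ₂, hQ₂'⟩ := bundle ψ hψsq hψstar hψmono x hx b₂ hb₂
  set r₁ : A := Ring.inverse (b₁ - x) with hr₁
  set r₂ : A := Ring.inverse (b₂ - x) with hr₂
  set c : A := b₂ - b₁ with hc
  set n₁ : ℝ := ‖Ring.inverse (imPart b₁)‖ with hn₁
  set n₂ : ℝ := ‖Ring.inverse (imPart b₂)‖ with hn₂
  have hn₁pos : 0 < n₁ := norm_inverse_pos hb₁
  have hn₂pos : 0 < n₂ := norm_inverse_pos hb₂
  set t₁ : ℝ := -((ψ r₁).im) with ht₁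
  set t₂ : ℝ := -((ψ r₂).im) with ht₂
  -- resolvent identity
  have hrc1 : r₁ * (b₁ - x) = 1 := by
    obtain ⟨v, hv⟩ := hU₁
    rw [hr₁, ← hv, Ring.inverse_unit, Units.inv_mul]
  have hcr2 : (b₂ - x) * r₂ = 1 := by
    obtain ⟨v, hv⟩ := hU₂
    rw [hr₂, ← hv, Ring.inverse_unit, Units.mul_inv]
  have hres : r₁ * (c * r₂) = r₁ - r₂ := by
    calc r₁ * (c * r₂) = r₁ * ((b₂ - x) * r₂) - (r₁ * (b₁ - x)) * r₂ := by
          rw [hc]; noncomm_ring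
    _ = r₁ - r₂ := by rw [hcr2, hrc1, mul_one, one_mul]
  -- Cauchy-Schwarz
  have habs2 : ‖ψ r₁ - ψ r₂‖ ^ 2 ≤
      (ψ (r₁ * star r₁)).re * (ψ (star (c * r₂) * (c * r₂))).re := by
    have h := psi_cs ψ hψsq (star r₁) (c * r₂)
    rw [star_star, hres, map_sub] at h
    exact h
  -- second factor bound
  have hsplit : star (c * r₂) * (c * r₂) = star r₂ * (star c * c) * r₂ := by
    rw [star_mul]; noncomm_ring
  have hcc : star c * c ≤ algebraMap ℝ A (‖c‖ * ‖c‖) := by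
    have h := IsSelfAdjoint.le_algebraMap_norm_self (A := A) (a := star c * c)
      (IsSelfAdjoint.star_mul_self c)
    rwa [CStarRing.norm_star_mul_self] at h
  have hconj3 : star r₂ * (star c * c) * r₂ ≤ (‖c‖ * ‖c‖) • (star r₂ * r₂) := by
    have h := star_left_conjugate_le_conjugate hcc r₂
    rwa [Algebra.algebraMap_eq_smul_one, mul_smul_comm, mul_one, smul_mul_assoc] at h
  have hF2 : (ψ (star (c * r₂) * (c * r₂))).re ≤ (‖c‖ * ‖c‖) * (n₂ * t₂) := by
    have h1 : (ψ (star (c * r₂) * (c * r₂))).re ≤ (‖c‖ * ‖c‖) * (ψ (star r₂ * r₂)).re := by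
      have h := hψmono _ _ (hsplit ▸ hconj3)
      rwa [← Complex.coe_smul, map_smul, smul_eq_mul, Complex.re_ofReal_mul] at h
    exact h1.trans (mul_le_mul_of_nonneg_left hQ₂' (mul_nonneg (norm_nonneg _) (norm_nonneg _)))
  have hF2nonneg : 0 ≤ (ψ (star (c * r₂) * (c * r₂))).re :=
    (Complex.nonneg_iff.mp (hψsq (c * r₂))).1
  -- combine
  have hD2 : ‖ψ r₁ - ψ r₂‖ ^ 2 ≤ (n₁ * t₁) * ((‖c‖ * ‖c‖) * (n₂ * t₂)) :=
    habs2.trans (mul_le_mul hQ₁ hF2 hF2nonneg (mul_nonneg hn₁pos.le him₁))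
  -- final arithmetic
  set Θ₁ : ℝ := -(n₁⁻¹ * (ψ r₁).im) with hΘ₁
  set Θ₂ : ℝ := -(n₂⁻¹ * (ψ r₂).im) with hΘ₂
  have hΘ₁' : Θ₁ = n₁⁻¹ * t₁ := by rw [hΘ₁, ht₁]; ring
  have hΘ₂' : Θ₂ = n₂⁻¹ * t₂ := by rw [hΘ₂, ht₂]; ring
  have hΘ₁nonneg : 0 ≤ Θ₁ := by
    rw [hΘ₁']; exact mul_nonneg (inv_nonneg.mpr hn₁pos.le) him₁
  have hΘ₂nonneg : 0 ≤ Θ₂ := by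
    rw [hΘ₂']; exact mul_nonneg (inv_nonneg.mpr hn₂pos.le) him₂
  have hnormc : ‖b₁ - b₂‖ = ‖c‖ := by rw [hc, norm_sub_rev]
  have hgoal : ‖ψ r₁ - ψ r₂‖ ≤
      Real.sqrt (Θ₁ * Θ₂) * n₁ * n₂ * ‖b₁ - b₂‖ := by
    have heq : Θ₁ * Θ₂ * (n₁ * n₂ * ‖c‖) ^ 2 = (n₁ * t₁) * ((‖c‖ * ‖c‖) * (n₂ * t₂)) := by
      rw [hΘ₁', hΘ₂']
      field_simp
    calc ‖ψ r₁ - ψ r₂‖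
        = Real.sqrt (‖ψ r₁ - ψ r₂‖ ^ 2) :=
          (Real.sqrt_sq (norm_nonneg _)).symm
    _ ≤ Real.sqrt (Θ₁ * Θ₂ * (n₁ * n₂ * ‖c‖) ^ 2) := by
          apply Real.sqrt_le_sqrt
          rw [heq]
          exact hD2
    _ = Real.sqrt (Θ₁ * Θ₂) * (n₁ * n₂ * ‖c‖) := by
          rw [Real.sqrt_mul (mul_nonneg hΘ₁nonneg hΘ₂nonneg),
            Real.sqrt_sq (by positivity)]
    _ = Real.sqrt (Θ₁ * Θ₂) * n₁ * n₂ * ‖b₁ - b₂‖ := by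
          rw [hnormc]; ring
  exact hgoal
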